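/- arXiv:1012.1066 — 2 statements merged into one kernel-verified Lean document; each statement's English description precedes it below -/
import Mathlib

section
/- Let W_n be the symmetric group on [1,n] viewed as a Coxeter group of type A_{n-1} with simple reflections s_i = (i,i+1). Let λ be a partition of n, t_λ the column-reading standard λ-tableau (whose columns are consecutive integers), w ∈ W_n, and t = w·t_λ the λ-tableau obtained by applying w entrywise. For i ∈ [1,n-1], l(s_i w) > l(w) if and only if either col_t(i) < col_t(i+1), or col_t(i) = col_t(i+1) and row_t(i) < row_t(i+1). -/
/-!
The left descents of `w` are read off `w⁻¹`: multiplying by the adjacent transposition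
`s_i = (i, i+1)` on the left toggles exactly one pair in the inversion set, namely the pair of
positions `w⁻¹ i`, `w⁻¹ (i+1)`, so `l(s_i w) > l(w)` iff `w⁻¹ i < w⁻¹ (i+1)`. Since the entry `j`
of `t = w · t_λ` sits in the cell of `t_λ` containing `w⁻¹ j`, and `t_λ` numbers its cells
column by column, top to bottom, this is the stated comparison of columns, then rows.
-/

noncomputable section

namespace WGTab

/-- The Coxeter length of a permutation of `Fin n`: the number of inversions. -/
def invLength {n : ℕ} (w : Equiv.Perm (Fin n)) : ℕ :=
  (Finset.univ.filter fun p : Fin n × Fin n => p.1 < p.2 ∧ w p.2 < w p.1).card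

/-- The cells of a Young diagram, as a type; a cell is a pair (row index, column index). -/
abbrev Cell (μ : YoungDiagram) : Type := {c : ℕ × ℕ // c ∈ μ}

/-- `tc` is the column-reading tableau `t_λ`: its entries are ordered by column, then by
row; equivalently its columns consist of consecutive integers, filled column by column. -/
def IsColReading {n : ℕ} {μ : YoungDiagram} (tc : Cell μ ≃ Fin n) : Prop :=
  ∀ c c' : Cell μ,
    tc c < tc c' ↔ (c.1.2 < c'.1.2 ∨ (c.1.2 = c'.1.2 ∧ c.1.1 < c'.1.1))

/-- `tr` is the row-reading tableau `tab^λ`: its entries are ordered by row, then by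
column; equivalently its rows consist of consecutive integers, filled row by row. -/
def IsRowReading {n : ℕ} {μ : YoungDiagram} (tr : Cell μ ≃ Fin n) : Prop :=
  ∀ c c' : Cell μ,
    tr c < tr c' ↔ (c.1.1 < c'.1.1 ∨ (c.1.1 = c'.1.1 ∧ c.1.2 < c'.1.2))

/-- A standard tableau: entries increase along rows and down columns. -/
def IsStdTab {n : ℕ} {μ : YoungDiagram} (t : Cell μ ≃ Fin n) : Prop :=
  ∀ c c' : Cell μ,
    ((c.1.1 = c'.1.1 ∧ c.1.2 < c'.1.2) → t c < t c') ∧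
    ((c.1.2 = c'.1.2 ∧ c.1.1 < c'.1.1) → t c < t c')

/-- The row index of the entry `i` in the tableau `t`. -/
def rowOf {n : ℕ} {μ : YoungDiagram} (t : Cell μ ≃ Fin n) (i : Fin n) : ℕ := (t.symm i).1.1

/-- The column index of the entry `i` in the tableau `t`. -/
def colOf {n : ℕ} {μ : YoungDiagram} (t : Cell μ ≃ Fin n) (i : Fin n) : ℕ := (t.symm i).1.2

/-- The permutation `w` with `t = w · t_λ` (where `tc` plays the role of `t_λ`). -/
def wOf {n : ℕ} {μ : YoungDiagram} (tc t : Cell μ ≃ Fin n) : Equiv.Perm (Fin n) :=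
  tc.symm.trans t

/-- The left weak order on the symmetric group: `u ≤_L w` iff `l(wu⁻¹) = l(w) - l(u)`. -/
def WkLeP {n : ℕ} (u w : Equiv.Perm (Fin n)) : Prop :=
  invLength (w * u⁻¹) + invLength u = invLength w

/-- Strict left weak order. -/
def WkLtP {n : ℕ} (u w : Equiv.Perm (Fin n)) : Prop := WkLeP u w ∧ u ≠ w


section

variable {n : ℕ}

def inversions (w : Equiv.Perm (Fin n)) : Finset (Fin n × Fin n) :=
  Finset.univ.filter fun p => p.1 < p.2 ∧ w p.2 < w p.1

lemma invLength_eq_card_inversions (w : Equiv.Perm (Fin n)) :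
    invLength w = (inversions w).card :=
  rfl

lemma mem_inversions {w : Equiv.Perm (Fin n)} {x y : Fin n} :
    (x, y) ∈ inversions w ↔ x < y ∧ w y < w x := by
  simp [inversions]

lemma swap_apply_lt_swap_apply_iff {a b u v : Fin n} (hab : (a : ℕ) + 1 = b)
    (hne_ab : ¬(u = a ∧ v = b)) (hne_ba : ¬(u = b ∧ v = a)) :
    Equiv.swap a b u < Equiv.swap a b v ↔ u < v := by
  rw [Equiv.swap_apply_def, Equiv.swap_apply_def]
  split_ifs <;> simp only [Fin.ext_iff, Fin.lt_def] at * <;> omega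

lemma inversions_swap_mul_of_lt {w : Equiv.Perm (Fin n)} {a b : Fin n} (hab : (a : ℕ) + 1 = b)
    (h : w⁻¹ a < w⁻¹ b) :
    inversions (Equiv.swap a b * w) = insert (w⁻¹ a, w⁻¹ b) (inversions w) := by
  ext ⟨x, y⟩
  rw [Finset.mem_insert, mem_inversions, mem_inversions, Prod.mk.injEq,
    Equiv.Perm.mul_apply, Equiv.Perm.mul_apply]
  by_cases hxy_ab : w x = a ∧ w y = b
  · obtain ⟨rfl, rfl⟩ := hxy_ab
    simp only [Equiv.Perm.coe_inv, Equiv.symm_apply_apply, Equiv.swap_apply_left,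
      Equiv.swap_apply_right] at h ⊢
    exact iff_of_true ⟨h, Fin.lt_def.mpr (by omega)⟩ (Or.inl ⟨trivial, trivial⟩)
  by_cases hxy_ba : w x = b ∧ w y = a
  · obtain ⟨rfl, rfl⟩ := hxy_ba
    simp only [Equiv.Perm.coe_inv, Equiv.symm_apply_apply] at h
    exact iff_of_false (fun hlt => h.asymm hlt.1) (by simp [h.asymm, h.ne'])
  rw [swap_apply_lt_swap_apply_iff hab (by tauto) (by tauto)]
  simp only [Equiv.Perm.eq_inv_iff_eq]
  tauto

lemma invLength_swap_mul_of_lt {w : Equiv.Perm (Fin n)} {a b : Fin n} (hab : (a : ℕ) + 1 = b)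
    (h : w⁻¹ a < w⁻¹ b) : invLength (Equiv.swap a b * w) = invLength w + 1 := by
  rw [invLength_eq_card_inversions, inversions_swap_mul_of_lt hab h,
    Finset.card_insert_of_notMem, invLength_eq_card_inversions]
  rw [mem_inversions, Equiv.Perm.coe_inv, Equiv.apply_symm_apply, Equiv.apply_symm_apply,
    Fin.lt_def]
  omega

lemma invLength_lt_invLength_swap_mul_iff {w : Equiv.Perm (Fin n)} {a b : Fin n}
    (hab : (a : ℕ) + 1 = b) :
    invLength w < invLength (Equiv.swap a b * w) ↔ w⁻¹ a < w⁻¹ b := by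
  refine ⟨fun hlt => ?_, fun h => by rw [invLength_swap_mul_of_lt hab h]; omega⟩
  by_contra hge
  have hne : w⁻¹ b ≠ w⁻¹ a := w⁻¹.injective.ne (Fin.ne_of_val_ne (by omega))
  have hba : (Equiv.swap a b * w)⁻¹ a < (Equiv.swap a b * w)⁻¹ b := by
    simpa using lt_of_le_of_ne (not_lt.mp hge) hne
  have hlen := invLength_swap_mul_of_lt hab hba
  rw [← mul_assoc, Equiv.swap_mul_self, one_mul] at hlen
  omega

lemma IsColReading.lt_iff {μ : YoungDiagram} {tc : Cell μ ≃ Fin n} (htc : IsColReading tc)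
    (j k : Fin n) :
    j < k ↔ colOf tc j < colOf tc k ∨ (colOf tc j = colOf tc k ∧ rowOf tc j < rowOf tc k) := by
  simpa [colOf, rowOf] using htc (tc.symm j) (tc.symm k)

end

/-- Entries are 0-indexed: the paper's entries `1, …, n` are `0, …, n-1` here. -/
theorem stmt2_general (n : ℕ) (μ : YoungDiagram)
    (tc : Cell μ ≃ Fin n) (htc : IsColReading tc)
    (w : Equiv.Perm (Fin n)) (i : ℕ) (hi : i + 1 < n) :
    invLength (Equiv.swap ⟨i, Nat.lt_of_succ_lt hi⟩ ⟨i + 1, hi⟩ * w) > invLength w ↔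
      (colOf (tc.trans w) ⟨i, Nat.lt_of_succ_lt hi⟩ < colOf (tc.trans w) ⟨i + 1, hi⟩ ∨
        (colOf (tc.trans w) ⟨i, Nat.lt_of_succ_lt hi⟩ = colOf (tc.trans w) ⟨i + 1, hi⟩ ∧
          rowOf (tc.trans w) ⟨i, Nat.lt_of_succ_lt hi⟩ < rowOf (tc.trans w) ⟨i + 1, hi⟩)) := by
  rw [gt_iff_lt, invLength_lt_invLength_swap_mul_iff rfl, htc.lt_iff]
  rfl

/-- `l(s_i w) > l(w)` iff the entry `i` of `t = w · t_λ` lies in an earlier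
column than `i+1`, or in the same column and an earlier row.  (Entries are 0-indexed:
the paper's entries `1, …, n` correspond to `0, …, n-1` here.) -/
theorem stmt2 (n : ℕ) (μ : YoungDiagram) (hcard : μ.cells.card = n)
    (tc : Cell μ ≃ Fin n) (htc : IsColReading tc)
    (w : Equiv.Perm (Fin n)) (i : ℕ) (hi : i + 1 < n) :
    invLength (Equiv.swap ⟨i, Nat.lt_of_succ_lt hi⟩ ⟨i + 1, hi⟩ * w) > invLength w ↔
      (colOf (tc.trans w) ⟨i, Nat.lt_of_succ_lt hi⟩ < colOf (tc.trans w) ⟨i + 1, hi⟩ ∨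
        (colOf (tc.trans w) ⟨i, Nat.lt_of_succ_lt hi⟩ = colOf (tc.trans w) ⟨i + 1, hi⟩ ∧
          rowOf (tc.trans w) ⟨i, Nat.lt_of_succ_lt hi⟩ < rowOf (tc.trans w) ⟨i + 1, hi⟩)) :=
  stmt2_general n μ tc htc w i hi

end WGTab
end
end

section
/- Let (W,S) be a Coxeter system, J ⊆ S, and 𝔍 a W-graph ideal with respect to J, with module 𝒮 having basis (b_w : w ∈ 𝔍) and bar involution. Then for each w ∈ 𝔍 there exist coefficients r_{y,w} ∈ ℤ[q,q⁻¹], defined for y ∈ 𝔍 with y < w in Bruhat order, such that b̄_w − b_w = Σ_{y<w} r_{y,w} b_y. -/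
open LaurentPolynomial Polynomial

noncomputable section

namespace WGI

/-- The ring `A = ℤ[q,q⁻¹]` of Laurent polynomials. -/
abbrev A : Type := LaurentPolynomial ℤ

/-- The indeterminate `q`. -/
def Q : A := LaurentPolynomial.T 1

/-- The element `q⁻¹`. -/
def Qi : A := LaurentPolynomial.T (-1)

variable {B W : Type} [Group W] {M : CoxeterMatrix B} (cs : CoxeterSystem M W)

/-- One step of the relation generating the Bruhat order: `w = tu` for a reflection `t`
(or `t = 1`) and `l(u) ≤ l(w)`. -/
def BStep (u w : W) : Prop :=
  cs.length u ≤ cs.length w ∧ ∃ t : W, (cs.IsReflection t ∨ t = 1) ∧ w = t * u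

/-- The Bruhat order on `W`: the transitive (and reflexive) closure of `BStep`. -/
def BrLe (u w : W) : Prop := Relation.ReflTransGen (BStep cs) u w

/-- Strict Bruhat order. -/
def BrLt (u w : W) : Prop := BrLe cs u w ∧ u ≠ w

/-- The left weak order: `u ≤_L w` iff `l(wu⁻¹) = l(w) - l(u)`, i.e. `u` is a suffix of `w`. -/
def WkLe (u w : W) : Prop := cs.length (w * u⁻¹) + cs.length u = cs.length w

/-- Strict left weak order. -/
def WkLt (u w : W) : Prop := WkLe cs u w ∧ u ≠ w

/-- An ideal of `(W, ≤_L)`: a subset closed under taking suffixes. -/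
def IsIdealWk (I : Set W) : Prop := ∀ u w : W, WkLe cs u w → w ∈ I → u ∈ I

/-- The set `D_J` of minimal left coset representatives of `W_J`. -/
def DD (J : Set B) : Set W := { w | ∀ j ∈ J, cs.length w < cs.length (w * cs.simple j) }

/-- Strong ascent: `sw > w` and `sw ∈ I`. -/
def SA (I : Set W) (s : B) (w : W) : Prop :=
  cs.length w < cs.length (cs.simple s * w) ∧ cs.simple s * w ∈ I

/-- Strong descent: `sw < w`. -/
def SD (s : B) (w : W) : Prop := cs.length (cs.simple s * w) < cs.length w

/-- Weak ascent: `sw > w` and `sw ∈ D_J \ I`. -/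
def WA (I : Set W) (J : Set B) (s : B) (w : W) : Prop :=
  cs.length w < cs.length (cs.simple s * w) ∧ cs.simple s * w ∈ DD cs J \ I

/-- Weak descent: `sw > w` and `sw ∉ D_J`. -/
def WD (J : Set B) (s : B) (w : W) : Prop :=
  cs.length w < cs.length (cs.simple s * w) ∧ cs.simple s * w ∉ DD cs J

/-- Descents: strong or weak. -/
def Desc (J : Set B) (s : B) (w : W) : Prop := SD cs s w ∨ WD cs J s w

/-- Ascents: strong or weak. -/
def Asc (I : Set W) (J : Set B) (s : B) (w : W) : Prop := SA cs I s w ∨ WA cs I J s w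

/-- The data making the ideal `I` (of the left weak order, contained in `D_J`) a
`W`-graph ideal with respect to `J`: an `H(W)`-module (a module together with operators
`T s` satisfying the quadratic and braid relations of the Hecke algebra) which is free
over `A` with basis indexed by `I`, on which the generators act by the four-case formula
of Definition 5.2, together with a compatible semilinear bar involution fixing `b₁`. -/
structure WGModule (I : Set W) (J : Set B) where
  V : Type
  [acg : AddCommGroup V]
  [mod : Module A V]
  ideal : IsIdealWk cs I
  subset : I ⊆ DD cs J
  one_mem : (1 : W) ∈ I
  bas : Module.Basis I A V
  T : B → V →ₗ[A] V
  quad : ∀ s : B, (T s) ∘ₗ (T s) = LinearMap.id + (Q - Qi) • T s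
  braid : ∀ s t : B,
    ((CoxeterSystem.alternatingWord s t (M s t)).map fun i => (T i : Module.End A V)).prod =
    ((CoxeterSystem.alternatingWord t s (M s t)).map fun i => (T i : Module.End A V)).prod
  /-- the polynomials `r^s_{y,w}` (divided by `q`, as elements of `ℤ[q]` with zero constant
  term they are recorded in `qℤ[q]` via `r_const`); `r s w y` is `r^s_{y,w}`. -/
  r : B → I → (I →₀ Polynomial ℤ)
  r_const : ∀ (s : B) (w y : I), ((r s w) y).coeff 0 = 0
  r_supp : ∀ (s : B) (w y : I), (r s w) y ≠ 0 → BrLt cs (y : W) (cs.simple s * (w : W))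
  act_SA : ∀ (s : B) (w : I) (h : SA cs I s (w : W)),
    T s (bas w) = bas ⟨cs.simple s * (w : W), h.2⟩
  act_SD : ∀ (s : B) (w : I), SD cs s (w : W) → ∀ h' : cs.simple s * (w : W) ∈ I,
    T s (bas w) = bas ⟨cs.simple s * (w : W), h'⟩ + (Q - Qi) • bas w
  act_WD : ∀ (s : B) (w : I), WD cs J s (w : W) → T s (bas w) = -Qi • bas w
  act_WA : ∀ (s : B) (w : I), WA cs I J s (w : W) →
    T s (bas w) = Q • bas w - (r s w).sum fun y p => (Polynomial.toLaurent p) • bas y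
  bar : V → V
  bar_add : ∀ x y : V, bar (x + y) = bar x + bar y
  bar_smul : ∀ (a : A) (x : V), bar (a • x) = (LaurentPolynomial.invert a) • bar x
  bar_one : bar (bas ⟨(1 : W), one_mem⟩) = bas ⟨(1 : W), one_mem⟩
  bar_T : ∀ (s : B) (x : V), bar (T s x) = T s (bar x) - (Q - Qi) • bar x

attribute [instance] WGModule.acg WGModule.mod

/-- `I` is a `W`-graph ideal with respect to `J`. -/
def IsWGraphIdeal (I : Set W) (J : Set B) : Prop := Nonempty (WGModule cs I J)

/-!
Induct on `ℓ(w)`. If `s` is a left descent of `w` and `v = s w`, then `b_w = T_s b_v`, and the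
compatibility of the bar involution with `T_s` gives
`b̄_w - b_w = T_s (b̄_v - b_v) - (q - q⁻¹) b̄_v`. By induction `b̄_v - b_v` only involves `b_y`
with `y < v`, and the four-case action formula shows that `T_s` sends such a `b_y` into the span
of the `b_z` with `z < w`: this uses the lifting property of the Bruhat order
(`y < v < s v` implies `s y < s v`). The lifting property reduces to the fact that, for a
reflection `t ≠ s`, `t` is a left inversion of `w` iff `s t s` is one of `s w`; this comes from
the inversion parity `η(w, t) ∈ ℤ/2`, read off from the action of `W` on `W × ℤ/2` generated by
`(t, ε) ↦ (s t s, ε + [t = s])`.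
-/

end WGI

theorem List.even_count_of_getElem_add_eq {α : Type*} [BEq α] (L : List α) (p : ℕ)
    (hlen : L.length = 2 * p) (h : ∀ k (hk : k < p), L[k + p] = L[k]) (a : α) :
    Even (L.count a) := by
  have hdrop : L.drop p = L.take p := by
    apply List.ext_getElem (by rw [List.length_drop, List.length_take]; omega)
    intro k h1 h2
    simp only [List.length_take] at h2
    simp only [List.getElem_drop, List.getElem_take, add_comm p k]
    exact h k (by omega)
  rw [← List.take_append_drop p L, List.count_append, hdrop]
  exact ⟨_, rfl⟩

namespace CoxeterSystem

variable {B W : Type*} [Group W] {M : CoxeterMatrix B} (cs : CoxeterSystem M W)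

open List

open scoped Classical

theorem simple_mul_mul_simple_eq_simple_iff (i : B) (t : W) :
    cs.simple i * t * cs.simple i = cs.simple i ↔ t = cs.simple i := by
  constructor
  · intro h
    simpa [mul_assoc] using congrArg (fun x => cs.simple i * x * cs.simple i) h
  · rintro rfl
    simp

def parityPerm (i : B) : Equiv.Perm (W × ZMod 2) :=
  Function.Involutive.toPerm
    (fun p => (cs.simple i * p.1 * cs.simple i, p.2 + if p.1 = cs.simple i then 1 else 0))
    (by
      rintro ⟨t, ε⟩
      by_cases h : t = cs.simple i
      · subst h; simp [add_assoc, CharTwo.add_self_eq_zero]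
      · simp [h, mul_assoc, mul_eq_one_iff_eq_inv])

theorem parityPerm_apply (i : B) (t : W) (ε : ZMod 2) :
    cs.parityPerm i (t, ε) =
      (cs.simple i * t * cs.simple i, ε + if t = cs.simple i then 1 else 0) :=
  rfl

theorem prod_map_parityPerm_apply (ω : List B) (t : W) (ε : ZMod 2) :
    (ω.map cs.parityPerm).prod (t, ε) =
      (cs.wordProd ω * t * (cs.wordProd ω)⁻¹, ε + (cs.rightInvSeq ω).count t) := by
  induction ω generalizing t ε with
  | nil => simp
  | cons i ω ih =>
    have hiff : cs.wordProd ω * t * (cs.wordProd ω)⁻¹ = cs.simple i ↔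
        (cs.wordProd ω)⁻¹ * cs.simple i * cs.wordProd ω = t := by
      constructor <;> intro h <;> rw [← h] <;> group
    rw [map_cons, prod_cons, Equiv.Perm.mul_apply, ih, parityPerm_apply, rightInvSeq.eq_2,
      count_cons, wordProd_cons, hiff]
    simp only [beq_iff_eq, mul_inv_rev, inv_simple, mul_assoc, Nat.cast_add, add_assoc]
    split_ifs <;> simp

theorem prod_map_alternatingWord_two_mul {G : Type*} [Monoid G] (f : B → G) (i i' : B) (m : ℕ) :
    ((alternatingWord i i' (2 * m)).map f).prod = (f i * f i') ^ m := by
  induction m with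
  | zero => simp [alternatingWord]
  | succ m ih =>
    rw [mul_add_one, alternatingWord_succ, alternatingWord_succ, pow_succ, ← ih]
    simp

theorem leftInvSeq_eq_rightInvSeq_of_wordProd_eq_one {ω : List B} (h : cs.wordProd ω = 1) :
    cs.leftInvSeq ω = cs.rightInvSeq ω := by
  apply ext_getElem (by simp)
  intro j h1 h2
  rw [← getD_eq_getElem _ 1 h1, ← getD_eq_getElem _ 1 h2]
  have := (cs.getD_leftInvSeq_mul_wordProd ω j).trans (cs.wordProd_mul_getD_rightInvSeq ω j).symm
  rwa [h, mul_one, one_mul] at this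

-- The braid word has product `1`, so its right and left inversion sequences agree, and the
-- latter is periodic with period `M i i'`.
theorem even_count_rightInvSeq_alternatingWord (i i' : B) (t : W) :
    Even ((cs.rightInvSeq (alternatingWord i i' (2 * M i i'))).count t) := by
  have hprod : cs.wordProd (alternatingWord i i' (2 * M i i')) = 1 := by
    simp [prod_alternatingWord_eq_mul_pow]
  rw [← cs.leftInvSeq_eq_rightInvSeq_of_wordProd_eq_one hprod]
  refine even_count_of_getElem_add_eq _ (M i i') (by simp) (fun k hk => ?_) t
  rw [getElem_leftInvSeq_alternatingWord cs i i' _ _ (by omega),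
    getElem_leftInvSeq_alternatingWord cs i i' _ _ (by omega),
    prod_alternatingWord_eq_mul_pow, prod_alternatingWord_eq_mul_pow]
  simp [pow_add, Nat.mul_add_div]

theorem isLiftable_parityPerm : M.IsLiftable cs.parityPerm := by
  intro i i'
  rw [← prod_map_alternatingWord_two_mul]
  ext ⟨t, ε⟩ : 1
  obtain ⟨c, hc⟩ := cs.even_count_rightInvSeq_alternatingWord i i' t
  rw [prod_map_parityPerm_apply, hc]
  simp [prod_alternatingWord_eq_mul_pow, CharTwo.add_self_eq_zero]

def parityRep : W →* Equiv.Perm (W × ZMod 2) :=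
  cs.lift ⟨cs.parityPerm, cs.isLiftable_parityPerm⟩

def inversionParity (w t : W) : ZMod 2 := (cs.parityRep w (t, 0)).2

theorem parityRep_wordProd (ω : List B) :
    cs.parityRep (cs.wordProd ω) = (ω.map cs.parityPerm).prod := by
  simp [wordProd, map_list_prod, Function.comp_def, parityRep]

theorem inversionParity_wordProd (ω : List B) (t : W) :
    cs.inversionParity (cs.wordProd ω) t = (cs.rightInvSeq ω).count t := by
  simp [inversionParity, parityRep_wordProd, prod_map_parityPerm_apply]

theorem parityRep_apply (w t : W) (ε : ZMod 2) :
    cs.parityRep w (t, ε) = (w * t * w⁻¹, ε + cs.inversionParity w t) := by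
  obtain ⟨ω, rfl⟩ := cs.wordProd_surjective w
  rw [parityRep_wordProd, prod_map_parityPerm_apply, inversionParity_wordProd]

theorem inversionParity_mul (u v t : W) :
    cs.inversionParity (u * v) t =
      cs.inversionParity v t + cs.inversionParity u (v * t * v⁻¹) := by
  have h : cs.parityRep (u * v) (t, 0) = cs.parityRep u (cs.parityRep v (t, 0)) := by
    rw [map_mul, Equiv.Perm.mul_apply]
  rw [parityRep_apply, parityRep_apply, parityRep_apply, zero_add, zero_add] at h
  exact congrArg Prod.snd h

theorem inversionParity_one (t : W) : cs.inversionParity 1 t = 0 := by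
  simp [inversionParity]

theorem inversionParity_simple (i : B) (t : W) :
    cs.inversionParity (cs.simple i) t = if t = cs.simple i then 1 else 0 := by
  simp [inversionParity, parityRep, parityPerm_apply]

theorem inversionParity_self {t : W} (ht : cs.IsReflection t) : cs.inversionParity t t = 1 := by
  obtain ⟨u, i, rfl⟩ := ht
  have hconj : u⁻¹ * (u * cs.simple i * u⁻¹) * u⁻¹⁻¹ = cs.simple i := by group
  have hcancel := cs.inversionParity_mul u u⁻¹ (u * cs.simple i * u⁻¹)
  rw [mul_inv_cancel, inversionParity_one, hconj] at hcancel
  rw [inversionParity_mul, hconj, inversionParity_mul, inversionParity_simple, if_pos rfl,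
    simple_mul_simple_self, one_mul, inv_simple]
  linear_combination -hcancel

theorem length_mul_lt_of_inversionParity_eq_one {w t : W} (h : cs.inversionParity w t = 1) :
    cs.length (w * t) < cs.length w := by
  obtain ⟨ω, hω, rfl⟩ := cs.exists_isReduced w
  rw [inversionParity_wordProd] at h
  have hmem : t ∈ cs.rightInvSeq ω := by
    by_contra hnot
    rw [count_eq_zero_of_not_mem hnot, Nat.cast_zero] at h
    exact zero_ne_one h
  exact (cs.isRightInversion_of_mem_rightInvSeq hω hmem).2

theorem inversionParity_eq_one_iff {w t : W} (ht : cs.IsReflection t) :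
    cs.inversionParity w t = 1 ↔ cs.length (w * t) < cs.length w := by
  refine ⟨cs.length_mul_lt_of_inversionParity_eq_one, fun h => ?_⟩
  rcases (by decide : ∀ a : ZMod 2, a = 0 ∨ a = 1) (cs.inversionParity w t) with h0 | h1
  swap
  · exact h1
  have hwt : cs.inversionParity (w * t) t = 1 := by
    rw [inversionParity_mul, inversionParity_self cs ht, ht.mul_self, one_mul, ht.inv, h0,
      add_zero]
  have := cs.length_mul_lt_of_inversionParity_eq_one hwt
  rw [mul_assoc, ht.mul_self, mul_one] at this
  omega

theorem length_simple_mul_mul_lt {w t : W} (i : B) (ht : cs.IsReflection t)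
    (hti : t ≠ cs.simple i) (h : cs.length (t * w) < cs.length w) :
    cs.length (cs.simple i * t * w) < cs.length (cs.simple i * w) := by
  set r := w⁻¹ * t * w
  have hr : cs.IsReflection r := by simpa using ht.conj w⁻¹
  have hwr : cs.inversionParity w r = 1 := by
    rw [inversionParity_eq_one_iff cs hr]
    simpa [r, mul_assoc] using h
  have hconj : cs.simple i * w * r * (cs.simple i * w)⁻¹ = cs.simple i * t * cs.simple i := by
    simp [r, mul_assoc]
  have hswr : cs.inversionParity (cs.simple i * w) r = 1 := by
    rw [← simple_mul_simple_cancel_left cs i (w := w), inversionParity_mul, hconj,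
      inversionParity_simple, if_neg (by rwa [simple_mul_mul_simple_eq_simple_iff]),
      add_zero] at hwr
    exact hwr
  simpa [r, mul_assoc] using (inversionParity_eq_one_iff cs hr).mp hswr

end CoxeterSystem

namespace WGI

variable {B W : Type} [Group W] {M : CoxeterMatrix B} (cs : CoxeterSystem M W)

section Bruhat

variable {cs}

theorem BrLe.length_le {u w : W} (h : BrLe cs u w) : cs.length u ≤ cs.length w := by
  induction h with
  | refl => exact le_rfl
  | tail _ step ih => exact ih.trans step.1

theorem BrLe.eq_of_length_le {u w : W} (h : BrLe cs u w) (hl : cs.length w ≤ cs.length u) :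
    u = w := by
  induction h with
  | refl => rfl
  | tail hub step ih =>
    obtain ⟨hlen, t, ht | rfl, rfl⟩ := step
    · exact absurd (le_antisymm (hl.trans (BrLe.length_le hub)) hlen) (ht.length_mul_right_ne _)
    · rw [one_mul] at hl ⊢
      exact ih hl

theorem BrLt.length_lt {u w : W} (h : BrLt cs u w) : cs.length u < cs.length w :=
  lt_of_not_ge fun hl => h.2 (h.1.eq_of_length_le hl)

theorem BrLe.trans_brLt {u v w : W} (h₁ : BrLe cs u v) (h₂ : BrLt cs v w) : BrLt cs u w :=
  ⟨h₁.trans h₂.1, fun h => by subst h; exact absurd h₁.length_le (not_le.2 h₂.length_lt)⟩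

theorem BrLt.trans_brLe {u v w : W} (h₁ : BrLt cs u v) (h₂ : BrLe cs v w) : BrLt cs u w :=
  ⟨h₁.1.trans h₂, fun h => by subst h; exact absurd h₂.length_le (not_le.2 h₁.length_lt)⟩

variable (cs) in
theorem brLt_simple_mul_of_length_lt {v : W} (i : B)
    (h : cs.length v < cs.length (cs.simple i * v)) : BrLt cs v (cs.simple i * v) :=
  ⟨.single ⟨h.le, _, .inl (cs.isReflection_simple i), rfl⟩, fun he => h.ne (he ▸ rfl)⟩

theorem BStep.simple_mul_brLe_or {v w : W} (i : B) (h : BStep cs v w) :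
    BrLe cs (cs.simple i * v) w ∨ BrLe cs (cs.simple i * v) (cs.simple i * w) := by
  obtain ⟨hlen, t, ht | rfl, rfl⟩ := h
  swap
  · exact .inr (by rw [one_mul]; exact Relation.ReflTransGen.refl)
  by_cases hti : t = cs.simple i
  · exact .inl (by rw [hti]; exact Relation.ReflTransGen.refl)
  by_cases hl : cs.length (cs.simple i * v) ≤ cs.length (cs.simple i * (t * v))
  · refine .inr (.single ⟨hl, _, .inl (ht.conj (cs.simple i)), ?_⟩)
    simp [mul_assoc]
  -- `t` is a left inversion of `t v`, hence `s t s` is one of `s t v`, i.e. `ℓ(s v) < ℓ(s t v)`.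
  have htv : cs.length (t * (t * v)) < cs.length (t * v) := by
    rw [← mul_assoc, ht.mul_self, one_mul]
    exact lt_of_le_of_ne hlen (ht.length_mul_right_ne v).symm
  have := cs.length_simple_mul_mul_lt i ht hti htv
  rw [mul_assoc, ← mul_assoc t, ht.mul_self, one_mul] at this
  exact absurd this.le hl

theorem BrLe.simple_mul_brLe_or {v w : W} (i : B) (h : BrLe cs v w) :
    BrLe cs (cs.simple i * v) w ∨ BrLe cs (cs.simple i * v) (cs.simple i * w) := by
  induction h with
  | refl => exact .inr .refl
  | tail _ step ih =>
    rcases ih with h₁ | h₁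
    · exact .inl (h₁.tail step)
    · exact (step.simple_mul_brLe_or i).imp h₁.trans h₁.trans

theorem BrLt.simple_mul {y v : W} {i : B} (hv : cs.length v < cs.length (cs.simple i * v))
    (h : BrLt cs y v) : BrLt cs (cs.simple i * y) (cs.simple i * v) := by
  rcases h.1.simple_mul_brLe_or i with h₁ | h₁
  · exact h₁.trans_brLt (brLt_simple_mul_of_length_lt cs i hv)
  · exact ⟨h₁, fun he => h.2 (mul_left_cancel he)⟩

end Bruhat

variable {cs} in
theorem IsIdealWk.simple_mul_mem {I : Set W} (hI : IsIdealWk cs I) {y : W} (hy : y ∈ I) {i : B}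
    (h : cs.length (cs.simple i * y) < cs.length y) : cs.simple i * y ∈ I := by
  refine hI _ y ?_ hy
  have := cs.length_simple_mul y i
  rw [WkLe, mul_inv_rev, cs.inv_simple, mul_inv_cancel_left, cs.length_simple]
  omega

namespace WGModule

variable {cs} {I : Set W} {J : Set B} (D : WGModule cs I J)

def spanBelow (w : W) : Submodule A D.V := Submodule.span A (D.bas '' {y | BrLt cs (y : W) w})

theorem bas_mem_spanBelow {y : I} {w : W} (h : BrLt cs y w) : D.bas y ∈ D.spanBelow w :=
  Submodule.subset_span ⟨y, h, rfl⟩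

theorem spanBelow_mono {v w : W} (h : BrLe cs v w) : D.spanBelow v ≤ D.spanBelow w :=
  Submodule.span_mono (Set.image_mono fun _ hy => BrLt.trans_brLe hy h)

theorem T_bas_mem_spanBelow {i : B} {v : W} (hv : cs.length v < cs.length (cs.simple i * v))
    {y : I} (hy : BrLt cs y v) : D.T i (D.bas y) ∈ D.spanBelow (cs.simple i * v) := by
  have hyv : BrLt cs y (cs.simple i * v) := hy.trans_brLe (brLt_simple_mul_of_length_lt cs i hv).1
  have hsy : BrLt cs (cs.simple i * y) (cs.simple i * v) := hy.simple_mul hv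
  by_cases hdesc : cs.length (cs.simple i * y) < cs.length y
  · have hmem := D.ideal.simple_mul_mem y.2 hdesc
    rw [D.act_SD i y hdesc hmem]
    exact add_mem (D.bas_mem_spanBelow (y := ⟨_, hmem⟩) hsy)
      (Submodule.smul_mem _ _ (D.bas_mem_spanBelow hyv))
  have hasc : cs.length y < cs.length (cs.simple i * y) :=
    lt_of_le_of_ne (not_lt.1 hdesc) (cs.length_simple_mul_ne y i).symm
  by_cases hI : cs.simple i * (y : W) ∈ I
  · rw [D.act_SA i y ⟨hasc, hI⟩]
    exact D.bas_mem_spanBelow (y := ⟨_, hI⟩) hsy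
  by_cases hD : cs.simple i * (y : W) ∈ DD cs J
  · rw [D.act_WA i y ⟨hasc, hD, hI⟩]
    refine sub_mem (Submodule.smul_mem _ _ (D.bas_mem_spanBelow hyv))
      (Submodule.finsuppSum_mem _ _ _ _ fun z hz => Submodule.smul_mem _ _ ?_)
    exact D.bas_mem_spanBelow ((D.r_supp i y z hz).trans_brLe hsy.1)
  · rw [D.act_WD i y ⟨hasc, hD⟩]
    exact Submodule.smul_mem _ _ (D.bas_mem_spanBelow hyv)

theorem map_T_spanBelow_le {i : B} {v : W} (hv : cs.length v < cs.length (cs.simple i * v)) :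
    (D.spanBelow v).map (D.T i) ≤ D.spanBelow (cs.simple i * v) := by
  rw [spanBelow, Submodule.map_span_le]
  rintro _ ⟨y, hy, rfl⟩
  exact D.T_bas_mem_spanBelow hv hy

theorem bar_bas_sub_bas_mem_spanBelow (w : I) : D.bar (D.bas w) - D.bas w ∈ D.spanBelow w := by
  induction hn : cs.length w using Nat.strong_induction_on generalizing w with
  | _ n ih =>
    by_cases hw1 : (w : W) = 1
    · obtain rfl : w = ⟨1, D.one_mem⟩ := Subtype.ext hw1
      rw [D.bar_one, sub_self]
      exact zero_mem _
    obtain ⟨i, hi⟩ := cs.exists_leftDescent_of_ne_one hw1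
    set v : I := ⟨cs.simple i * w, D.ideal.simple_mul_mem w.2 hi⟩
    have hsv : cs.simple i * (v : W) = w := cs.simple_mul_simple_cancel_left i
    have hv : cs.length v < cs.length (cs.simple i * v) := by rwa [hsv]
    have hvw : BrLt cs v w := hsv ▸ brLt_simple_mul_of_length_lt cs i hv
    have hbw : D.T i (D.bas v) = D.bas w := by
      rw [D.act_SA i v ⟨hv, hsv ▸ w.2⟩]
      exact congrArg D.bas (Subtype.ext hsv)
    have he : D.bar (D.bas v) - D.bas v ∈ D.spanBelow v := ih _ (hn ▸ hi) v rfl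
    have hbarv : D.bar (D.bas v) ∈ D.spanBelow w := by
      rw [← sub_add_cancel (D.bar (D.bas v)) (D.bas v)]
      exact add_mem (D.spanBelow_mono hvw.1 he) (D.bas_mem_spanBelow hvw)
    have hT : D.T i (D.bar (D.bas v) - D.bas v) ∈ D.spanBelow w :=
      hsv ▸ D.map_T_spanBelow_le hv (Submodule.mem_map_of_mem he)
    rw [← hbw, D.bar_T, sub_right_comm, ← map_sub]
    exact sub_mem hT (Submodule.smul_mem _ _ hbarv)

end WGModule

open scoped Classical

/-- `b̄_w - b_w` is a linear combination of the `b_y` with `y < w`. -/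
theorem stmt6 (I : Set W) (J : Set B) (D : WGModule cs I J) (w : I) :
    ∃ f : I →₀ A, (∀ y : I, f y ≠ 0 → BrLt cs (y : W) (w : W)) ∧
      D.bar (D.bas w) - D.bas w = f.sum fun y a => a • D.bas y := by
  have hmem := (D.bas.mem_span_image).mp (D.bar_bas_sub_bas_mem_spanBelow w)
  refine ⟨D.bas.repr (D.bar (D.bas w) - D.bas w),
    fun y hy => hmem (Finsupp.mem_support_iff.mpr hy), ?_⟩
  rw [← Finsupp.linearCombination_apply, D.bas.linearCombination_repr]

end WGI
end
end
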